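/- Let N = 4L+1. The vectors u_n ∈ ℝ^N defined by u_n(k) = S(3L+n+k)S(3L+n-k) for -L ≤ n ≤ L are linearly independent. -/

import Mathlib

open scoped Real BigOperators

/-- `S N k = ∏_{j=1}^{k} 2 sin(π j / N)`, with `S N 0 = 1` (empty product);
note `S N k = 0` for `k ≥ N`. -/
noncomputable def S (N : ℕ) (k : ℕ) : ℝ :=
  ∏ j ∈ Finset.Icc 1 k, 2 * Real.sin (Real.pi * j / N)

/-- The index set `I_N = {-M+1, ..., -M+N}` with `M = ⌊(N+1)/2⌋`.
For `N = 4L+1` this is `{-2L, ..., 2L}`. -/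
noncomputable def Iset (N : ℕ) : Finset ℤ :=
  Finset.Icc (1 - (((N + 1) / 2 : ℕ) : ℤ)) ((N : ℤ) - (((N + 1) / 2 : ℕ) : ℤ))

/-- The centered discrete Fourier transform. -/
noncomputable def dft (N : ℕ) (u : ℤ → ℂ) (l : ℤ) : ℂ :=
  (Real.sqrt N : ℂ)⁻¹ *
    ∑ k ∈ Iset N, Complex.exp (-2 * Real.pi * Complex.I * k * l / N) * u k

/-- The even vectors `u_n(k) = S(3L+n+k) S(3L+n-k)` (for `N = 4L+1`). -/
noncomputable def uvec (L : ℕ) (n k : ℤ) : ℝ :=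
  S (4 * L + 1) (3 * L + n + k).toNat * S (4 * L + 1) (3 * L + n - k).toNat

/-- The odd vectors `v_n(k) = sin(2πk/N) S(3L+n+k) S(3L+n-k)` (for `N = 4L+1`). -/
noncomputable def vvec (L : ℕ) (n k : ℤ) : ℝ :=
  Real.sin (2 * Real.pi * k / (4 * L + 1)) * uvec L n k

/-! At `k = L - n` the vector `u_n` is a product of sines of angles in `(0, π)`, hence positive,
while every `u_m` with `m > n` vanishes there: its first factor is `S(4L + m - n)`, which contains
the factor `2 sin π = 0`. So the vectors form a triangular system. -/

theorem linearIndependent_of_triangular {ι κ R : Type*} [LinearOrder ι] [Ring R]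
    [NoZeroDivisors R] (v : ι → κ → R) (p : ι → κ) (hdiag : ∀ i, v i (p i) ≠ 0)
    (hzero : ∀ i j, i < j → v j (p i) = 0) : LinearIndependent R v := by
  classical
  rw [linearIndependent_iff']
  intro s
  induction s using Finset.induction_on_min with
  | empty => simp
  | insert a s hlt ih =>
    intro g hsum
    have ha : a ∉ s := fun h => lt_irrefl a (hlt a h)
    rw [Finset.sum_insert ha] at hsum
    have hga : g a = 0 := by
      have hval := congrFun hsum (p a)
      simp only [Pi.add_apply, Finset.sum_apply, Pi.smul_apply, smul_eq_mul, Pi.zero_apply] at hval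
      rw [Finset.sum_eq_zero fun j hj => by rw [hzero a j (hlt j hj), mul_zero], add_zero] at hval
      exact (mul_eq_zero.1 hval).resolve_right (hdiag a)
    rw [hga, zero_smul, zero_add] at hsum
    intro i hi
    rcases Finset.mem_insert.1 hi with rfl | hi
    · exact hga
    · exact ih g hsum i hi

lemma S_pos {N k : ℕ} (h : k < N) : 0 < S N k := by
  apply Finset.prod_pos
  intro j hj
  rw [Finset.mem_Icc] at hj
  have hN : (0 : ℝ) < N := by exact_mod_cast Nat.zero_lt_of_lt h
  have hjN : (j : ℝ) < N := by exact_mod_cast hj.2.trans_lt h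
  have hj1 : (1 : ℝ) ≤ j := by exact_mod_cast hj.1
  have : 0 < Real.sin (π * j / N) := by
    apply Real.sin_pos_of_pos_of_lt_pi (by positivity)
    rw [div_lt_iff₀ hN]
    nlinarith [Real.pi_pos]
  linarith

lemma S_eq_zero {N k : ℕ} (hN : 0 < N) (h : N ≤ k) : S N k = 0 := by
  apply Finset.prod_eq_zero (i := N) (Finset.mem_Icc.2 ⟨hN, h⟩)
  rw [mul_div_assoc, div_self (Nat.cast_ne_zero.2 hN.ne'), mul_one, Real.sin_pi, mul_zero]

lemma uvec_pos (L : ℕ) {n : ℤ} (h₁ : -(L : ℤ) ≤ n) (h₂ : n ≤ L) :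
    0 < uvec L n (L - n) :=
  mul_pos (S_pos (by omega)) (S_pos (by omega))

lemma uvec_eq_zero (L : ℕ) {m n : ℤ} (h : n < m) : uvec L m (L - n) = 0 := by
  rw [uvec, S_eq_zero (by omega) (by omega), zero_mul]

theorem stmt11_general (L : ℕ) :
    LinearIndependent ℝ (fun n : {n : ℤ // -(L : ℤ) ≤ n ∧ n ≤ L} =>
      (fun k : {k : ℤ // k ∈ Iset (4 * L + 1)} => uvec L n.1 k.1)) := by
  have hmem (n : {n : ℤ // -(L : ℤ) ≤ n ∧ n ≤ L}) : (L : ℤ) - n.1 ∈ Iset (4 * L + 1) := by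
    obtain ⟨n, h₁, h₂⟩ := n
    simp only [Iset, Finset.mem_Icc]
    omega
  exact linearIndependent_of_triangular _ (fun n => ⟨L - n.1, hmem n⟩)
    (fun n => (uvec_pos L n.2.1 n.2.2).ne') (fun _ _ h => uvec_eq_zero L h)

theorem stmt11 (L : ℕ) (hL : 1 ≤ L) :
    LinearIndependent ℝ (fun n : {n : ℤ // -(L : ℤ) ≤ n ∧ n ≤ L} =>
      (fun k : {k : ℤ // k ∈ Iset (4 * L + 1)} => uvec L n.1 k.1)) :=
  stmt11_general L
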